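/- arXiv:0711.1548 — 6 statements merged into one kernel-verified Lean document; each statement's English description precedes it below -/
import Mathlib

section
/- Let A be an n×n complex Hermitian matrix which is either zero, or has at least one strictly positive eigenvalue and at least one strictly negative eigenvalue. Then there exists an n×n complex Hermitian positive definite matrix H such that trace(H·A) = 0. -/
/-!
For a positive function `f`, the matrix `H = f(A)` is positive definite and
`trace (H * A) = ∑ i, f (λᵢ) λᵢ`. With `P` and `N` the sums of the positive and negative
parts of the eigenvalues, the function equal to `N` on positive reals and to `P` elsewhere
makes this sum `N * P - P * N = 0`.
-/

open scoped ComplexOrder MatrixOrder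
open Matrix

theorem ite_mul_eq_mul_posPart_sub_mul_negPart {𝕜 : Type*} [Field 𝕜] [LinearOrder 𝕜]
    [IsStrictOrderedRing 𝕜] (a b x : 𝕜) :
    (if 0 < x then a else b) * x = a * x⁺ - b * x⁻ := by
  split_ifs with hx
  · simp [posPart_eq_self.mpr hx.le, negPart_eq_zero.mpr hx.le]
  · push Not at hx
    simp [posPart_eq_zero.mpr hx, negPart_eq_neg.mpr hx]

theorem exists_pos_fun_sum_mul_eq_zero {ι 𝕜 : Type*} [Fintype ι] [Field 𝕜] [LinearOrder 𝕜]
    [IsStrictOrderedRing 𝕜] (v : ι → 𝕜) (hpos : ∃ i, 0 < v i) (hneg : ∃ i, v i < 0) :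
    ∃ f : 𝕜 → 𝕜, (∀ x, 0 < f x) ∧ ∑ i, f (v i) * v i = 0 := by
  obtain ⟨p, hp⟩ := hpos
  obtain ⟨m, hm⟩ := hneg
  set P := ∑ i, (v i)⁺
  set N := ∑ i, (v i)⁻
  have hP : 0 < P := (posPart_pos_iff.mpr hp).trans_le <|
    Finset.single_le_sum (fun i _ ↦ posPart_nonneg (v i)) (Finset.mem_univ p)
  have hN : 0 < N := (negPart_pos_iff.mpr hm).trans_le <|
    Finset.single_le_sum (fun i _ ↦ negPart_nonneg (v i)) (Finset.mem_univ m)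
  refine ⟨fun x ↦ if 0 < x then N else P, fun x ↦ by dsimp only; split_ifs <;> assumption, ?_⟩
  simp only [ite_mul_eq_mul_posPart_sub_mul_negPart, Finset.sum_sub_distrib, ← Finset.mul_sum]
  ring

namespace Matrix.IsHermitian

variable {n 𝕜 : Type*} [Fintype n] [DecidableEq n] [RCLike 𝕜] {A : Matrix n n 𝕜}

theorem trace_cfc (hA : A.IsHermitian) (f : ℝ → ℝ) :
    (cfc f A).trace = ∑ i, (f (hA.eigenvalues i) : 𝕜) := by
  rw [hA.cfc_eq, IsHermitian.cfc, Unitary.conjStarAlgAut_apply, trace_mul_cycle,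
    Unitary.coe_star_mul_self, one_mul, trace_diagonal]
  rfl

theorem trace_cfc_mul_self (hA : A.IsHermitian) (f : ℝ → ℝ) :
    (cfc f A * A).trace = ((∑ i, f (hA.eigenvalues i) * hA.eigenvalues i : ℝ) : 𝕜) := by
  conv_lhs => enter [1, 2]; rw [← cfc_id' ℝ A]
  rw [← cfc_mul f _ A ((spectrum ℝ A).toFinite.continuousOn f), hA.trace_cfc]
  push_cast
  rfl

theorem posDef_cfc (hA : A.IsHermitian) {f : ℝ → ℝ} (hf : ∀ x, 0 < f x) :
    (cfc f A).PosDef :=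
  isStrictlyPositive_iff_posDef.mp <|
    (cfc_isStrictlyPositive_iff f A ((spectrum ℝ A).toFinite.continuousOn f)).mpr fun x _ ↦ hf x

end Matrix.IsHermitian

/-- Let `A` be an `n × n` complex Hermitian matrix which is either zero, or has at least
one strictly positive and at least one strictly negative eigenvalue. Then there is an
`n × n` complex Hermitian positive definite matrix `H` with `trace (H * A) = 0`. -/
theorem stmt_1 {n : ℕ} (A : Matrix (Fin n) (Fin n) ℂ) (hA : A.IsHermitian)
    (h : A = 0 ∨ ((∃ i, 0 < hA.eigenvalues i) ∧ (∃ i, hA.eigenvalues i < 0))) :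
    ∃ H : Matrix (Fin n) (Fin n) ℂ, H.PosDef ∧ (H * A).trace = 0 := by
  rcases h with rfl | ⟨hpos, hneg⟩
  · exact ⟨1, .one, by simp⟩
  obtain ⟨f, hf, hsum⟩ := exists_pos_fun_sum_mul_eq_zero _ hpos hneg
  refine ⟨cfc f A, hA.posDef_cfc hf, ?_⟩
  rw [hA.trace_cfc_mul_self, hsum, RCLike.ofReal_zero]
end

section
/- Let Ω ⊆ ℝ^N be open, let X, Y be smooth vector fields on Ω, and set L = X − iY, L̄ = X + iY. Let u : Ω → ℂ be a C² function with L̄ u = 0 on Ω. Then for the function |u|² = u · conj(u) one has L(L̄ |u|²) = |L u|² + u · ( L(L̄ (conj u)) − L̄(L (conj u)) ) on Ω, i.e. L(L̄|u|²) = |Lu|² + u·[L,L̄](conj u). -/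
open Set MeasureTheory

noncomputable section

abbrev Euc (N : ℕ) : Type := EuclideanSpace ℝ (Fin N)

variable {N : ℕ}

/-- Action of a vector field `X` on a function `u`: `(Xu)(x) = Du(x)(X(x))`. -/
def vAct {F : Type} [NormedAddCommGroup F] [NormedSpace ℝ F]
    (X : Euc N → Euc N) (u : Euc N → F) : Euc N → F :=
  fun x => fderiv ℝ u x (X x)

/-- Lie bracket of vector fields. -/
def lieB (X Y : Euc N → Euc N) : Euc N → Euc N :=
  fun x => fderiv ℝ Y x (X x) - fderiv ℝ X x (Y x)

/-- `L = X - iY`. -/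
def Lop (X Y : Euc N → Euc N) (u : Euc N → ℂ) : Euc N → ℂ :=
  fun x => vAct X u x - Complex.I * vAct Y u x

/-- `L̄ = X + iY`. -/
def Lbar (X Y : Euc N → Euc N) (u : Euc N → ℂ) : Euc N → ℂ :=
  fun x => vAct X u x + Complex.I * vAct Y u x

/-- Sussmann leaf of a family `D` of vector fields through `x₀` in `Ω`. -/
def SussmannLeaf (D : Set (Euc N → Euc N)) (Ω : Set (Euc N)) (x₀ : Euc N) : Set (Euc N) :=
  {x | ∃ (ℓ : ℕ) (e : Fin (ℓ + 1) → Euc N) (s : Fin ℓ → ℝ → Euc N),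
    e 0 = x₀ ∧ e (Fin.last ℓ) = x ∧ (∀ i, e i ∈ Ω) ∧
    ∀ j : Fin ℓ,
      ContDiffOn ℝ 1 (s j) (Icc 0 1) ∧
      (∀ t ∈ Icc (0 : ℝ) 1, s j t ∈ Ω) ∧
      (∀ t ∈ Icc (0 : ℝ) 1, ∃ X ∈ D, derivWithin (s j) (Icc 0 1) t = X (s j t)) ∧
      s j 0 = e j.castSucc ∧ s j 1 = e j.succ}

/-- The commutator condition (local form of weak pseudoconcavity, identity (1.12)). -/
def CommCond {n : ℕ} (Ω : Set (Euc N)) (X Y : Fin n → Euc N → Euc N)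
    (β : Fin n → Euc N → ℂ) : Prop :=
  ∀ w : Euc N → ℂ, ContDiffOn ℝ 2 w Ω → ∀ x ∈ Ω,
    Complex.I * ∑ j, (Lop (X j) (Y j) (Lbar (X j) (Y j) w) x
        - Lbar (X j) (Y j) (Lop (X j) (Y j) w) x)
      = ∑ r, (β r x * Lop (X r) (Y r) w x
        + (starRingEnd ℂ) (β r x) * Lbar (X r) (Y r) w x)

/-- The degenerate-elliptic operator `P = Re Σ LⱼL̄ⱼ + Im Σ βʲLⱼ` acting on real functions. -/
def Pop {n : ℕ} (X Y : Fin n → Euc N → Euc N) (β : Fin n → Euc N → ℂ)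
    (w : Euc N → ℝ) : Euc N → ℝ :=
  fun x => (∑ j, (vAct (X j) (vAct (X j) w) x + vAct (Y j) (vAct (Y j) w) x))
    + ∑ j, ((β j x).im * vAct (X j) w x - (β j x).re * vAct (Y j) w x)

/-- Exterior conormal to a closed set `F` at `x₀`. -/
def IsExtConormal (Ω F : Set (Euc N)) (x₀ : Euc N) (ξ : Euc N →L[ℝ] ℝ) : Prop :=
  x₀ ∈ F ∧ ξ ≠ 0 ∧ ∃ f : Euc N → ℝ, ContDiffOn ℝ (⊤ : ℕ∞) f Ω ∧ fderiv ℝ f x₀ = ξ ∧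
    ∀ x ∈ F, f x ≤ f x₀


-- Auxiliary lemmas -------------------------------------------------------

/-- Derivation (product) rule for `vAct`. -/
lemma vAct_mul {X : Euc N → Euc N} {f g : Euc N → ℂ} {x : Euc N}
    (hf : DifferentiableAt ℝ f x) (hg : DifferentiableAt ℝ g x) :
    vAct X (fun y => f y * g y) x = vAct X f x * g x + f x * vAct X g x := by
  simp [vAct, fderiv_fun_mul hf hg]
  ring

/-- `vAct` commutes with complex conjugation. -/
lemma vAct_conj {X : Euc N → Euc N} {f : Euc N → ℂ} {x : Euc N} :
    vAct X (fun y => (starRingEnd ℂ) (f y)) x = (starRingEnd ℂ) (vAct X f x) := by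
  simp only [vAct]
  rw [show (fun y => (starRingEnd ℂ) (f y)) = (fun y => star (f y)) from rfl, fderiv_star]
  simp

/-- `vAct` only depends on the values of the function on an open neighborhood. -/
lemma vAct_congr {Ω : Set (Euc N)} (hΩ : IsOpen Ω) {X : Euc N → Euc N} {f g : Euc N → ℂ}
    {x : Euc N} (hx : x ∈ Ω) (h : ∀ y ∈ Ω, f y = g y) : vAct X f x = vAct X g x := by
  have : f =ᶠ[nhds x] g := Filter.eventuallyEq_of_mem (hΩ.mem_nhds hx) h
  simp [vAct, this.fderiv_eq]

lemma vAct_contDiffOn {Ω : Set (Euc N)} (hΩ : IsOpen Ω) {X : Euc N → Euc N}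
    (hX : ContDiffOn ℝ 1 X Ω) {f : Euc N → ℂ} (hf : ContDiffOn ℝ 2 f Ω) :
    ContDiffOn ℝ 1 (vAct X f) Ω :=
  (hf.fderiv_of_isOpen hΩ (by norm_num)).clm_apply hX

/-- Identity (1.15): if `L̄u = 0` then `L(L̄|u|²) = |Lu|² + u·[L,L̄](conj u)`. -/
theorem stmt_3 {N : ℕ} (Ω : Set (Euc N)) (hΩ : IsOpen Ω)
    (X Y : Euc N → Euc N) (hX : ContDiffOn ℝ (⊤ : ℕ∞) X Ω) (hY : ContDiffOn ℝ (⊤ : ℕ∞) Y Ω)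
    (u : Euc N → ℂ) (hu : ContDiffOn ℝ 2 u Ω)
    (hCR : ∀ x ∈ Ω, Lbar X Y u x = 0) :
    ∀ x ∈ Ω,
      Lop X Y (Lbar X Y (fun y => u y * (starRingEnd ℂ) (u y))) x
        = Lop X Y u x * (starRingEnd ℂ) (Lop X Y u x)
          + u x * (Lop X Y (Lbar X Y (fun y => (starRingEnd ℂ) (u y))) x
              - Lbar X Y (Lop X Y (fun y => (starRingEnd ℂ) (u y))) x) := by
  intro x hx
  set v : Euc N → ℂ := fun y => (starRingEnd ℂ) (u y) with hv
  have hX1 : ContDiffOn ℝ 1 X Ω := hX.of_le (by simp)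
  have hY1 : ContDiffOn ℝ 1 Y Ω := hY.of_le (by simp)
  have hvC : ContDiffOn ℝ 2 v Ω := by
    have : v = (fun z => star z) ∘ u := rfl
    rw [this]
    exact ((starL' ℝ : ℂ ≃L[ℝ] ℂ).toContinuousLinearMap.contDiff).comp_contDiffOn hu
  have hud : ∀ y ∈ Ω, DifferentiableAt ℝ u y := fun y hy =>
    (hu.differentiableOn (by norm_num) y hy).differentiableAt (hΩ.mem_nhds hy)
  have hvd : ∀ y ∈ Ω, DifferentiableAt ℝ v y := fun y hy =>
    (hvC.differentiableOn (by norm_num) y hy).differentiableAt (hΩ.mem_nhds hy)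
  -- differentiability of L̄v
  have hLbarvC : ContDiffOn ℝ 1 (Lbar X Y v) Ω := by
    have h1 := vAct_contDiffOn hΩ hX1 hvC
    have h2 := vAct_contDiffOn hΩ hY1 hvC
    exact h1.add ((contDiffOn_const (c := Complex.I)).mul h2)
  have hLbarvd : DifferentiableAt ℝ (Lbar X Y v) x :=
    (hLbarvC.differentiableOn one_ne_zero x hx).differentiableAt (hΩ.mem_nhds hx)
  -- Lbar v = conj (Lop u) on Ω, and Lop v = conj (Lbar u) = 0 on Ω
  have hLbarv : ∀ y ∈ Ω, Lbar X Y v y = (starRingEnd ℂ) (Lop X Y u y) := by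
    intro y hy
    simp only [Lbar, Lop, hv, vAct_conj, map_sub, map_mul, Complex.conj_I]
    ring
  have hLopv : ∀ y ∈ Ω, Lop X Y v y = 0 := by
    intro y hy
    have := hCR y hy
    simp only [Lbar] at this
    simp only [Lop, hv, vAct_conj]
    rw [show ((starRingEnd ℂ) (vAct X u y) : ℂ)
        = -(-Complex.I * (starRingEnd ℂ) (vAct Y u y)) by
      have := congrArg (starRingEnd ℂ) this
      simp only [map_add, map_mul, Complex.conj_I, map_zero] at this
      linear_combination this]
    ring
  -- Step A : L̄(u·v) = u · L̄ v on Ω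
  have stepA : ∀ y ∈ Ω, Lbar X Y (fun z => u z * v z) y = u y * Lbar X Y v y := by
    intro y hy
    have hCRy := hCR y hy
    simp only [Lbar] at hCRy ⊢
    rw [vAct_mul (hud y hy) (hvd y hy), vAct_mul (hud y hy) (hvd y hy)]
    linear_combination v y * hCRy
  -- Step B : replace inside Lop via congruence
  have stepB : Lop X Y (Lbar X Y (fun z => u z * v z)) x
      = Lop X Y (fun z => u z * Lbar X Y v z) x := by
    simp only [Lop]
    rw [vAct_congr hΩ hx stepA, vAct_congr hΩ hx stepA]
  -- Step C : product rule
  have stepC : Lop X Y (fun z => u z * Lbar X Y v z) x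
      = Lop X Y u x * Lbar X Y v x + u x * Lop X Y (Lbar X Y v) x := by
    simp only [Lop]
    rw [vAct_mul (hud x hx) hLbarvd, vAct_mul (hud x hx) hLbarvd]
    ring
  -- L̄(L v) x = 0
  have hLLv : Lbar X Y (Lop X Y v) x = 0 := by
    have : ∀ Z : Euc N → Euc N, vAct Z (Lop X Y v) x = 0 := by
      intro Z
      rw [vAct_congr hΩ (g := fun _ => (0 : ℂ)) hx hLopv]
      simp [vAct]
    simp [Lbar, this]
  rw [stepB, stepC, hLbarv x hx, hLLv]
  ring
end
end

section
/- Let Ω ⊆ ℝ^N be open and let X_1,…,X_n, Y_1,…,Y_n be smooth vector fields on Ω, β^1,…,β^n : Ω → ℂ smooth functions, satisfying the commutator condition. Let u : Ω → ℂ be C² with L̄_j u = 0 on Ω for every j = 1,…,n. Then P(|u|²) = Σ_{j=1}^n |L_j u|² on Ω; in particular P(|u|²) ≥ 0 on Ω. -/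
open Set MeasureTheory Topology

noncomputable section

variable {N : ℕ}

section Helpers
open Topology

variable {N : ℕ}

lemma hasFDerivAt_conj' {u : Euc N → ℂ} {x : Euc N} (hu : DifferentiableAt ℝ u x) :
    HasFDerivAt (fun y => (starRingEnd ℂ) (u y))
      ((Complex.conjCLE : ℂ →L[ℝ] ℂ).comp (fderiv ℝ u x)) x :=
  (Complex.conjCLE.toContinuousLinearMap.hasFDerivAt).comp x hu.hasFDerivAt

/-- derivative of `y ↦ re (A y * conj (u y))` -/
lemma hasFDerivAt_mulconj' {u A : Euc N → ℂ} {x : Euc N}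
    (hu : DifferentiableAt ℝ u x) (hA : DifferentiableAt ℝ A x) :
    HasFDerivAt (fun y => (A y * (starRingEnd ℂ) (u y)).re)
      (Complex.reCLM.comp
        (A x • ((Complex.conjCLE : ℂ →L[ℝ] ℂ).comp (fderiv ℝ u x))
          + ((starRingEnd ℂ) (u x)) • fderiv ℝ A x)) x :=
  (Complex.reCLM.hasFDerivAt).comp x (hA.hasFDerivAt.mul (hasFDerivAt_conj' hu))

lemma first_deriv' {u : Euc N → ℂ} {x : Euc N} (hu : DifferentiableAt ℝ u x)
    (V : Euc N → Euc N) :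
    vAct V (fun y => Complex.normSq (u y)) x
      = 2 * (fderiv ℝ u x (V x) * (starRingEnd ℂ) (u x)).re := by
  have hkey : HasFDerivAt (fun y => Complex.normSq (u y))
      (Complex.reCLM.comp
        (u x • ((Complex.conjCLE : ℂ →L[ℝ] ℂ).comp (fderiv ℝ u x))
          + ((starRingEnd ℂ) (u x)) • fderiv ℝ u x)) x := by
    have h := hasFDerivAt_mulconj' hu hu
    have heq : (fun y => (u y * (starRingEnd ℂ) (u y)).re)
        = fun y => Complex.normSq (u y) := by
      funext y; rw [Complex.mul_conj, Complex.ofReal_re]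
    rwa [heq] at h
  show fderiv ℝ (fun y => Complex.normSq (u y)) x (V x) = _
  rw [hkey.fderiv]
  simp [Complex.mul_re, Complex.conj_re, Complex.conj_im]
  ring

lemma second_deriv' {u : Euc N → ℂ} {Ω : Set (Euc N)} (hΩ : IsOpen Ω) {x : Euc N} (hx : x ∈ Ω)
    (hud : ∀ y ∈ Ω, DifferentiableAt ℝ u y)
    (V W : Euc N → Euc N)
    (hA : DifferentiableAt ℝ (fun y => fderiv ℝ u y (V y)) x) :
    vAct W (vAct V (fun y => Complex.normSq (u y))) x
      = 2 * ((fderiv ℝ (fun y => fderiv ℝ u y (V y)) x (W x)) * (starRingEnd ℂ) (u x)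
          + (fderiv ℝ u x (V x)) * (starRingEnd ℂ) (fderiv ℝ u x (W x))).re := by
  have heq : vAct V (fun y => Complex.normSq (u y))
      =ᶠ[𝓝 x] fun y => 2 * ((fderiv ℝ u y (V y)) * (starRingEnd ℂ) (u y)).re := by
    filter_upwards [hΩ.mem_nhds hx] with y hy
    exact first_deriv' (hud y hy) V
  have hkey := (hasFDerivAt_mulconj' (hud x hx) hA).const_mul (2 : ℝ)
  show fderiv ℝ (vAct V (fun y => Complex.normSq (u y))) x (W x) = _
  rw [heq.fderiv_eq, hkey.fderiv]
  simp [Complex.mul_re, Complex.conj_re, Complex.conj_im]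
  ring

lemma fderiv_zero_on' {f : Euc N → ℂ} {Ω : Set (Euc N)} (hΩ : IsOpen Ω) {x : Euc N}
    (hx : x ∈ Ω) (h : ∀ y ∈ Ω, f y = 0) : fderiv ℝ f x = 0 := by
  have heq : f =ᶠ[𝓝 x] fun _ => (0 : ℂ) := by
    filter_upwards [hΩ.mem_nhds hx] with y hy using h y hy
  rw [heq.fderiv_eq]
  exact fderiv_const_apply 0

lemma fderiv_add_mul' {A B : Euc N → ℂ} {x : Euc N} (c : ℂ)
    (hA : DifferentiableAt ℝ A x) (hB : DifferentiableAt ℝ B x) (v : Euc N) :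
    fderiv ℝ (fun y => A y + c * B y) x v = fderiv ℝ A x v + c * fderiv ℝ B x v := by
  have h := hA.hasFDerivAt.add ((hB.hasFDerivAt).const_mul c)
  rw [show (fun y => A y + c * B y) = (A + fun y => c * B y) from rfl, h.fderiv]; simp

lemma fderiv_sub_mul' {A B : Euc N → ℂ} {x : Euc N} (c : ℂ)
    (hA : DifferentiableAt ℝ A x) (hB : DifferentiableAt ℝ B x) (v : Euc N) :
    fderiv ℝ (fun y => A y - c * B y) x v = fderiv ℝ A x v - c * fderiv ℝ B x v := by
  have h := hA.hasFDerivAt.sub ((hB.hasFDerivAt).const_mul c)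
  rw [show (fun y => A y - c * B y) = (A - fun y => c * B y) from rfl, h.fderiv]; simp

lemma final_real' {n : ℕ} (a b p q bet : Fin n → ℂ) (u0 : ℂ)
    (hcr : ∀ j, a j + Complex.I * b j = 0)
    (hST : (∑ j, (p j + q j)) = Complex.I * ∑ j, (bet j * a j)) :
    (∑ j, (2 * ((p j * (starRingEnd ℂ) u0 + a j * (starRingEnd ℂ) (a j)).re)
        + 2 * ((q j * (starRingEnd ℂ) u0 + b j * (starRingEnd ℂ) (b j)).re)))
      + ∑ j, ((bet j).im * (2 * ((a j * (starRingEnd ℂ) u0).re))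
        - (bet j).re * (2 * ((b j * (starRingEnd ℂ) u0).re)))
      = ∑ j, Complex.normSq (a j - Complex.I * b j) := by
  rw [← sub_eq_zero]
  have step1 : ((∑ j, (2 * ((p j * (starRingEnd ℂ) u0 + a j * (starRingEnd ℂ) (a j)).re)
        + 2 * ((q j * (starRingEnd ℂ) u0 + b j * (starRingEnd ℂ) (b j)).re)))
      + ∑ j, ((bet j).im * (2 * ((a j * (starRingEnd ℂ) u0).re))
        - (bet j).re * (2 * ((b j * (starRingEnd ℂ) u0).re))))
      - ∑ j, Complex.normSq (a j - Complex.I * b j)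
      = ∑ j, (2 * (((p j + q j) * (starRingEnd ℂ) u0).re)
          + 2 * ((bet j * a j * (starRingEnd ℂ) u0).im)) := by
    rw [← Finset.sum_add_distrib, ← Finset.sum_sub_distrib]
    refine Finset.sum_congr rfl fun j _ => ?_
    have hb : b j = Complex.I * a j := by
      linear_combination (-Complex.I) * hcr j + (b j) * Complex.I_mul_I
    rw [hb]
    simp only [Complex.normSq_apply, Complex.mul_re, Complex.mul_im, Complex.add_re,
      Complex.add_im, Complex.conj_re, Complex.conj_im, Complex.I_re, Complex.I_im,
      Complex.sub_re, Complex.sub_im]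
    ring
  rw [step1]
  have step2 : ∑ j, (2 * (((p j + q j) * (starRingEnd ℂ) u0).re)
          + 2 * ((bet j * a j * (starRingEnd ℂ) u0).im))
      = 2 * (((∑ j, (p j + q j)) * (starRingEnd ℂ) u0).re)
        + 2 * (((∑ j, bet j * a j) * (starRingEnd ℂ) u0).im) := by
    rw [Finset.sum_add_distrib, Finset.sum_mul, Finset.sum_mul, ← Finset.mul_sum,
      ← Finset.mul_sum, Complex.re_sum, Complex.im_sum]
  rw [step2, hST]
  simp only [Complex.mul_re, Complex.mul_im, Complex.I_re, Complex.I_im]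
  ring

end Helpers

/-- Identity (1.16): under the commutator condition, if `L̄ⱼu = 0` for all `j` then
`P(|u|²) = Σⱼ |Lⱼu|² ≥ 0`. -/
theorem stmt_4 {N n : ℕ} (Ω : Set (Euc N)) (hΩ : IsOpen Ω)
    (X Y : Fin n → Euc N → Euc N) (β : Fin n → Euc N → ℂ)
    (hX : ∀ j, ContDiffOn ℝ (⊤ : ℕ∞) (X j) Ω) (hY : ∀ j, ContDiffOn ℝ (⊤ : ℕ∞) (Y j) Ω)
    (hβ : ∀ j, ContDiffOn ℝ (⊤ : ℕ∞) (β j) Ω)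
    (hcomm : CommCond Ω X Y β)
    (u : Euc N → ℂ) (hu : ContDiffOn ℝ 2 u Ω)
    (hCR : ∀ j, ∀ x ∈ Ω, Lbar (X j) (Y j) u x = 0) :
    (∀ x ∈ Ω, Pop X Y β (fun y => Complex.normSq (u y)) x
        = ∑ j, Complex.normSq (Lop (X j) (Y j) u x)) ∧
    (∀ x ∈ Ω, 0 ≤ Pop X Y β (fun y => Complex.normSq (u y)) x) := by
  have key : ∀ x ∈ Ω, Pop X Y β (fun y => Complex.normSq (u y)) x
      = ∑ j, Complex.normSq (Lop (X j) (Y j) u x) := by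
    intro x hx
    have hmem : Ω ∈ 𝓝 x := hΩ.mem_nhds hx
    have hud : ∀ y ∈ Ω, DifferentiableAt ℝ u y := fun y hy =>
      (hu.contDiffAt (hΩ.mem_nhds hy)).differentiableAt two_ne_zero
    have hu' : DifferentiableAt ℝ (fderiv ℝ u) x :=
      ((hu.contDiffAt hmem).fderiv_right (m := 1) (by norm_num)).differentiableAt one_ne_zero
    have hXd : ∀ j, DifferentiableAt ℝ (X j) x := fun j =>
      ((hX j).contDiffAt hmem).differentiableAt (by simp)
    have hYd : ∀ j, DifferentiableAt ℝ (Y j) x := fun j =>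
      ((hY j).contDiffAt hmem).differentiableAt (by simp)
    have hAd : ∀ j, DifferentiableAt ℝ (fun y => fderiv ℝ u y (X j y)) x := fun j =>
      hu'.clm_apply (hXd j)
    have hBd : ∀ j, DifferentiableAt ℝ (fun y => fderiv ℝ u y (Y j y)) x := fun j =>
      hu'.clm_apply (hYd j)
    have hCRj : ∀ j, fderiv ℝ u x (X j x) + Complex.I * fderiv ℝ u x (Y j x) = 0 := fun j => by
      have h := hCR j x hx; simpa [Lbar, vAct] using h
    have hzero : ∀ j, fderiv ℝ
        (fun y => fderiv ℝ u y (X j y) + Complex.I * fderiv ℝ u y (Y j y)) x = 0 := fun j =>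
      fderiv_zero_on' hΩ hx (fun y hy => by have h := hCR j y hy; simpa [Lbar, vAct] using h)
    have hder : ∀ j (v : Euc N),
        fderiv ℝ (fun y => fderiv ℝ u y (X j y)) x v
          + Complex.I * fderiv ℝ (fun y => fderiv ℝ u y (Y j y)) x v = 0 := by
      intro j v
      rw [← fderiv_add_mul' Complex.I (hAd j) (hBd j), hzero j]
      simp
    have hsub : ∀ j (v : Euc N),
        fderiv ℝ (fun y => fderiv ℝ u y (X j y) - Complex.I * fderiv ℝ u y (Y j y)) x v
          = fderiv ℝ (fun y => fderiv ℝ u y (X j y)) x v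
            - Complex.I * fderiv ℝ (fun y => fderiv ℝ u y (Y j y)) x v := fun j v =>
      fderiv_sub_mul' Complex.I (hAd j) (hBd j) v
    have hLbarf : ∀ j, Lbar (X j) (Y j) u
        = fun y => fderiv ℝ u y (X j y) + Complex.I * fderiv ℝ u y (Y j y) := fun j => rfl
    have hLopf : ∀ j, Lop (X j) (Y j) u
        = fun y => fderiv ℝ u y (X j y) - Complex.I * fderiv ℝ u y (Y j y) := fun j => rfl
    have hL2 : ∑ j, (Lop (X j) (Y j) (Lbar (X j) (Y j) u) x
          - Lbar (X j) (Y j) (Lop (X j) (Y j) u) x)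
        = (-2 : ℂ) * ∑ j, (fderiv ℝ (fun y => fderiv ℝ u y (X j y)) x (X j x)
          + fderiv ℝ (fun y => fderiv ℝ u y (Y j y)) x (Y j x)) := by
      rw [Finset.mul_sum]
      refine Finset.sum_congr rfl fun j _ => ?_
      simp only [Lop, Lbar, vAct, hLbarf, hLopf]
      rw [hzero j]
      simp only [ContinuousLinearMap.zero_apply, hsub]
      linear_combination hder j (X j x) + (-Complex.I) * hder j (Y j x)
        + 2 * (fderiv ℝ (fun y => fderiv ℝ u y (Y j y)) x (Y j x)) * Complex.I_mul_I
    have hR2 : ∑ r, (β r x * Lop (X r) (Y r) u x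
          + (starRingEnd ℂ) (β r x) * Lbar (X r) (Y r) u x)
        = (2 : ℂ) * ∑ j, (β j x * fderiv ℝ u x (X j x)) := by
      rw [Finset.mul_sum]
      refine Finset.sum_congr rfl fun j _ => ?_
      simp only [Lop, Lbar, vAct]
      linear_combination ((starRingEnd ℂ) (β j x) - β j x) * hCRj j
    have hc := hcomm u hu x hx
    rw [hL2, hR2] at hc
    have hST : (∑ j, (fderiv ℝ (fun y => fderiv ℝ u y (X j y)) x (X j x)
          + fderiv ℝ (fun y => fderiv ℝ u y (Y j y)) x (Y j x)))
        = Complex.I * ∑ j, (β j x * fderiv ℝ u x (X j x)) := by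
      linear_combination (Complex.I/2) * hc
        + (∑ j, (fderiv ℝ (fun y => fderiv ℝ u y (X j y)) x (X j x)
          + fderiv ℝ (fun y => fderiv ℝ u y (Y j y)) x (Y j x))) * Complex.I_mul_I
    simp only [Pop]
    have e1 : ∑ j, (vAct (X j) (vAct (X j) (fun y => Complex.normSq (u y))) x
          + vAct (Y j) (vAct (Y j) (fun y => Complex.normSq (u y))) x)
        = ∑ j, (2 * ((fderiv ℝ (fun y => fderiv ℝ u y (X j y)) x (X j x) * (starRingEnd ℂ) (u x)
              + fderiv ℝ u x (X j x) * (starRingEnd ℂ) (fderiv ℝ u x (X j x))).re)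
          + 2 * ((fderiv ℝ (fun y => fderiv ℝ u y (Y j y)) x (Y j x) * (starRingEnd ℂ) (u x)
              + fderiv ℝ u x (Y j x) * (starRingEnd ℂ) (fderiv ℝ u x (Y j x))).re)) :=
      Finset.sum_congr rfl fun j _ => by
        rw [second_deriv' hΩ hx hud (X j) (X j) (hAd j),
            second_deriv' hΩ hx hud (Y j) (Y j) (hBd j)]
    have e2 : ∑ j, ((β j x).im * vAct (X j) (fun y => Complex.normSq (u y)) x
          - (β j x).re * vAct (Y j) (fun y => Complex.normSq (u y)) x)
        = ∑ j, ((β j x).im * (2 * (fderiv ℝ u x (X j x) * (starRingEnd ℂ) (u x)).re)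
          - (β j x).re * (2 * (fderiv ℝ u x (Y j x) * (starRingEnd ℂ) (u x)).re)) :=
      Finset.sum_congr rfl fun j _ => by
        rw [first_deriv' (hud x hx) (X j), first_deriv' (hud x hx) (Y j)]
    have e3 : ∑ j, Complex.normSq (Lop (X j) (Y j) u x)
        = ∑ j, Complex.normSq (fderiv ℝ u x (X j x)
            - Complex.I * fderiv ℝ u x (Y j x)) := by
      simp only [Lop, vAct]
    rw [e1, e2, e3]
    exact final_real' (fun j => fderiv ℝ u x (X j x)) (fun j => fderiv ℝ u x (Y j x))
      (fun j => fderiv ℝ (fun y => fderiv ℝ u y (X j y)) x (X j x))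
      (fun j => fderiv ℝ (fun y => fderiv ℝ u y (Y j y)) x (Y j x))
      (fun j => β j x) (u x) hCRj hST
  refine ⟨key, fun x hx => ?_⟩
  rw [key x hx]
  exact Finset.sum_nonneg fun j _ => Complex.normSq_nonneg _
end
end

section
/- Let Ω ⊆ ℝ^N be open and let X_1,…,X_n, Y_1,…,Y_n be smooth vector fields on Ω, β^1,…,β^n : Ω → ℂ smooth functions, satisfying the commutator condition. Let u : Ω → ℂ be C² with L̄_j u = 0 on Ω for every j = 1,…,n. Then P(Re u) = 0 on Ω. -/
open Set MeasureTheory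

noncomputable section

variable {N : ℕ}

section Helpers

variable {N : ℕ}

lemma vAct_zero_of_eqOn_zero {Ω : Set (Euc N)} (hΩ : IsOpen Ω)
    (X : Euc N → Euc N) {f : Euc N → ℂ} (hf : ∀ y ∈ Ω, f y = 0)
    {x : Euc N} (hx : x ∈ Ω) : vAct X f x = 0 := by
  have hev : f =ᶠ[nhds x] (fun _ => (0:ℂ)) :=
    Filter.eventuallyEq_of_mem (hΩ.mem_nhds hx) hf
  simp [vAct, hev.fderiv_eq]

lemma diffAt_of_eqOn_zero {Ω : Set (Euc N)} (hΩ : IsOpen Ω)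
    {f : Euc N → ℂ} (hf : ∀ y ∈ Ω, f y = 0)
    {x : Euc N} (hx : x ∈ Ω) : DifferentiableAt ℝ f x := by
  have hev : f =ᶠ[nhds x] (fun _ => (0:ℂ)) :=
    Filter.eventuallyEq_of_mem (hΩ.mem_nhds hx) hf
  exact (differentiableAt_const 0).congr_of_eventuallyEq hev

lemma vAct_comb2 (X : Euc N → Euc N) {f g : Euc N → ℂ} (c d : ℂ) {x : Euc N}
    (hf : DifferentiableAt ℝ f x) (hg : DifferentiableAt ℝ g x) :
    vAct X (fun y => c * f y + d * g y) x = c * vAct X f x + d * vAct X g x := by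
  unfold vAct
  rw [fderiv_fun_add (hf.const_mul c) (hg.const_mul d), fderiv_const_mul hf c,
    fderiv_const_mul hg d]
  simp

lemma vAct_re (X : Euc N → Euc N) {f : Euc N → ℂ} {x : Euc N}
    (hf : DifferentiableAt ℝ f x) :
    vAct X (fun y => (f y).re) x = (vAct X f x).re := by
  unfold vAct
  have h : (fun y => (f y).re) = (Complex.reCLM ∘ f) := rfl
  rw [h, fderiv_comp x Complex.reCLM.differentiableAt hf, Complex.reCLM.fderiv]
  rfl

lemma vAct2_re {Ω : Set (Euc N)} (hΩ : IsOpen Ω) (X Z : Euc N → Euc N)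
    {f : Euc N → ℂ} {x : Euc N} (hx : x ∈ Ω)
    (hfd : ∀ y ∈ Ω, DifferentiableAt ℝ f y)
    (hvd : DifferentiableAt ℝ (vAct Z f) x) :
    vAct X (vAct Z (fun y => (f y).re)) x = (vAct X (vAct Z f) x).re := by
  have hev : vAct Z (fun y => (f y).re) =ᶠ[nhds x] (fun y => (vAct Z f y).re) :=
    Filter.eventuallyEq_of_mem (hΩ.mem_nhds hx) (fun y hy => vAct_re Z (hfd y hy))
  have h1 : vAct X (vAct Z (fun y => (f y).re)) x
      = vAct X (fun y => (vAct Z f y).re) x := by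
    show (fderiv ℝ (vAct Z fun y => (f y).re) x) (X x)
      = (fderiv ℝ (fun y => (vAct Z f y).re) x) (X x)
    rw [hev.fderiv_eq]
  rw [h1, vAct_re X hvd]

end Helpers

/-- Identity (1.17): under the commutator condition, if `L̄ⱼu = 0` for all `j` then
`P(Re u) = 0`. -/
theorem stmt_5 {N n : ℕ} (Ω : Set (Euc N)) (hΩ : IsOpen Ω)
    (X Y : Fin n → Euc N → Euc N) (β : Fin n → Euc N → ℂ)
    (hX : ∀ j, ContDiffOn ℝ (⊤ : ℕ∞) (X j) Ω) (hY : ∀ j, ContDiffOn ℝ (⊤ : ℕ∞) (Y j) Ω)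
    (hβ : ∀ j, ContDiffOn ℝ (⊤ : ℕ∞) (β j) Ω)
    (hcomm : CommCond Ω X Y β)
    (u : Euc N → ℂ) (hu : ContDiffOn ℝ 2 u Ω)
    (hCR : ∀ j, ∀ x ∈ Ω, Lbar (X j) (Y j) u x = 0) :
    ∀ x ∈ Ω, Pop X Y β (fun y => (u y).re) x = 0 := by
  intro x hx
  -- basic differentiability facts
  have hud : ∀ y ∈ Ω, DifferentiableAt ℝ u y := fun y hy =>
    (hu.contDiffAt (hΩ.mem_nhds hy)).differentiableAt two_ne_zero
  have hfd : ContDiffOn ℝ 1 (fderiv ℝ u) Ω :=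
    hu.fderiv_of_isOpen hΩ (by norm_num)
  have hvX : ∀ j : Fin n, ContDiffOn ℝ 1 (vAct (X j) u) Ω := fun j =>
    hfd.clm_apply ((hX j).of_le (by simp))
  have hvY : ∀ j : Fin n, ContDiffOn ℝ 1 (vAct (Y j) u) Ω := fun j =>
    hfd.clm_apply ((hY j).of_le (by simp))
  have hdX : ∀ j : Fin n, DifferentiableAt ℝ (vAct (X j) u) x := fun j =>
    ((hvX j).contDiffAt (hΩ.mem_nhds hx)).differentiableAt one_ne_zero
  have hdY : ∀ j : Fin n, DifferentiableAt ℝ (vAct (Y j) u) x := fun j =>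
    ((hvY j).contDiffAt (hΩ.mem_nhds hx)).differentiableAt one_ne_zero
  have hCRx : ∀ j : Fin n, Lbar (X j) (Y j) u x = 0 := fun j => hCR j x hx
  -- from the CR equations: Yⱼu = i Xⱼu at x
  have hb : ∀ j : Fin n, vAct (Y j) u x = Complex.I * vAct (X j) u x := by
    intro j
    have h0 := hCRx j
    unfold Lbar at h0
    have h1 : vAct (X j) u x = -(Complex.I * vAct (Y j) u x) := by
      linear_combination h0
    rw [h1]
    linear_combination (vAct (Y j) u x) * Complex.I_sq
  have hLop : ∀ j : Fin n, Lop (X j) (Y j) u x = 2 * vAct (X j) u x := by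
    intro j
    unfold Lop
    rw [hb j]
    linear_combination (-(vAct (X j) u x)) * Complex.I_sq
  -- Lⱼ(L̄ⱼ u) = 0 at x
  have hF2 : ∀ j : Fin n, Lop (X j) (Y j) (Lbar (X j) (Y j) u) x = 0 := by
    intro j
    unfold Lop
    rw [vAct_zero_of_eqOn_zero hΩ _ (hCR j) hx, vAct_zero_of_eqOn_zero hΩ _ (hCR j) hx]
    ring
  -- L̄ⱼ(Lⱼ u) = 2 (XⱼXⱼ + YⱼYⱼ) u at x
  have hF3 : ∀ j : Fin n, Lbar (X j) (Y j) (Lop (X j) (Y j) u) x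
      = 2 * (vAct (X j) (vAct (X j) u) x + vAct (Y j) (vAct (Y j) u) x) := by
    intro j
    have hdbar : DifferentiableAt ℝ (Lbar (X j) (Y j) u) x :=
      diffAt_of_eqOn_zero hΩ (hCR j) hx
    have e1 : Lop (X j) (Y j) u
        = fun y => (2:ℂ) * vAct (X j) u y + (-1 : ℂ) * Lbar (X j) (Y j) u y := by
      funext y; simp only [Lop, Lbar]; ring
    have eX : vAct (X j) (Lop (X j) (Y j) u) x = 2 * vAct (X j) (vAct (X j) u) x := by
      rw [e1, vAct_comb2 _ _ _ (hdX j) hdbar, vAct_zero_of_eqOn_zero hΩ _ (hCR j) hx]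
      ring
    have e2 : Lop (X j) (Y j) u
        = fun y => (-(2*Complex.I)) * vAct (Y j) u y + (1:ℂ) * Lbar (X j) (Y j) u y := by
      funext y; simp only [Lop, Lbar]; ring
    have eY : vAct (Y j) (Lop (X j) (Y j) u) x
        = -(2*Complex.I) * vAct (Y j) (vAct (Y j) u) x := by
      rw [e2, vAct_comb2 _ _ _ (hdY j) hdbar, vAct_zero_of_eqOn_zero hΩ _ (hCR j) hx]
      ring
    unfold Lbar
    rw [eX, eY]
    linear_combination (-2 * vAct (Y j) (vAct (Y j) u) x) * Complex.I_sq
  -- apply the commutator condition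
  have hc := hcomm u hu x hx
  simp only [hF2, hF3, hCRx, hLop, mul_zero, add_zero, zero_sub] at hc
  -- hc : I * ∑ j, -(2*(A j + B j)) = ∑ r, β r x * (2 * a r)
  have e3 : ∑ j : Fin n, -(2 * (vAct (X j) (vAct (X j) u) x + vAct (Y j) (vAct (Y j) u) x))
      = -2 * ∑ j : Fin n, (vAct (X j) (vAct (X j) u) x + vAct (Y j) (vAct (Y j) u) x) := by
    rw [Finset.mul_sum]
    exact Finset.sum_congr rfl (fun j _ => by ring)
  have e4 : ∑ r : Fin n, β r x * (2 * vAct (X r) u x)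
      = 2 * ∑ r : Fin n, β r x * vAct (X r) u x := by
    rw [Finset.mul_sum]
    exact Finset.sum_congr rfl (fun j _ => by ring)
  rw [e3, e4] at hc
  have hS : ∑ j : Fin n, (vAct (X j) (vAct (X j) u) x + vAct (Y j) (vAct (Y j) u) x)
      = Complex.I * ∑ r : Fin n, β r x * vAct (X r) u x := by
    linear_combination (Complex.I/2) * hc
      + (∑ j : Fin n, (vAct (X j) (vAct (X j) u) x + vAct (Y j) (vAct (Y j) u) x))
        * Complex.I_sq
  -- rewrite the real second-order terms
  have h1 : ∀ j : Fin n, vAct (X j) (vAct (X j) (fun y => (u y).re)) x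
      = (vAct (X j) (vAct (X j) u) x).re := fun j =>
    vAct2_re hΩ (X j) (X j) hx hud (hdX j)
  have h2 : ∀ j : Fin n, vAct (Y j) (vAct (Y j) (fun y => (u y).re)) x
      = (vAct (Y j) (vAct (Y j) u) x).re := fun j =>
    vAct2_re hΩ (Y j) (Y j) hx hud (hdY j)
  have h3 : ∀ j : Fin n, vAct (X j) (fun y => (u y).re) x = (vAct (X j) u x).re :=
    fun j => vAct_re (X j) (hud x hx)
  have h4 : ∀ j : Fin n, vAct (Y j) (fun y => (u y).re) x = (vAct (Y j) u x).re :=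
    fun j => vAct_re (Y j) (hud x hx)
  have hre : ∑ j : Fin n, ((vAct (X j) (vAct (X j) u) x).re + (vAct (Y j) (vAct (Y j) u) x).re)
      = -∑ j : Fin n, ((β j x) * vAct (X j) u x).im := by
    have := congrArg Complex.re hS
    simpa [Complex.re_sum, Complex.im_sum, Complex.mul_re] using this
  simp only [Pop, h1, h2, h3, h4, hb]
  have h5 : ∑ j : Fin n, ((β j x).im * (vAct (X j) u x).re
        - (β j x).re * (Complex.I * vAct (X j) u x).re)
      = ∑ j : Fin n, ((β j x) * vAct (X j) u x).im :=
    Finset.sum_congr rfl (fun j _ => by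
      simp [Complex.mul_im, Complex.mul_re]; ring)
  rw [hre, h5]
  ring
end
end

section
/- Let M ⊆ ℝ^N be open, let Y_0, Y_1, …, Y_ℓ be smooth vector fields on M, and define P u = Σ_{j=1}^ℓ Y_j(Y_j u) + Y_0 u on C² functions. Let x₁ ∈ M and suppose that (Y_{j₀} r)(x₁) ≠ 0 for some j₀ with 1 ≤ j₀ ≤ ℓ, where r(x) = |x|² is the squared Euclidean norm. Then there exist an open neighborhood V of x₁ in M and γ₀ > 0 such that for every γ ≥ γ₀ the function g_γ(x) = exp(−γ|x|²) satisfies (P g_γ)(x) > 0 for all x ∈ V. -/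
open Set MeasureTheory

noncomputable section

variable {N : ℕ}

/-- Formula (3.2): if `(Y_{j₀} |x|²)(x₁) ≠ 0` for some `1 ≤ j₀ ≤ ℓ`, then
`P(e^{-γ|x|²}) > 0` near `x₁` for all sufficiently large `γ`. -/
theorem stmt_9 {N ℓ : ℕ} (M : Set (Euc N)) (hM : IsOpen M)
    (Y₀ : Euc N → Euc N) (Y : Fin ℓ → Euc N → Euc N)
    (hY₀ : ContDiffOn ℝ (⊤ : ℕ∞) Y₀ M) (hY : ∀ j, ContDiffOn ℝ (⊤ : ℕ∞) (Y j) M)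
    (x₁ : Euc N) (hx₁ : x₁ ∈ M) (j₀ : Fin ℓ)
    (hj₀ : vAct (Y j₀) (fun x => ‖x‖ ^ 2) x₁ ≠ 0) :
    ∃ V : Set (Euc N), IsOpen V ∧ x₁ ∈ V ∧ V ⊆ M ∧
      ∃ γ₀ > (0 : ℝ), ∀ γ ≥ γ₀, ∀ x ∈ V,
        0 < (∑ j, vAct (Y j) (vAct (Y j) (fun y => Real.exp (-γ * ‖y‖ ^ 2))) x)
            + vAct Y₀ (fun y => Real.exp (-γ * ‖y‖ ^ 2)) x := by
  classical
  set ψ : Fin ℓ → Euc N → ℝ := fun j x => @inner ℝ _ _ x (Y j x) with hψdef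
  set ψ₀ : Euc N → ℝ := fun x => @inner ℝ _ _ x (Y₀ x) with hψ₀def
  have hYd : ∀ (j : Fin ℓ) (x : Euc N), x ∈ M → DifferentiableAt ℝ (Y j) x := fun j x hx =>
    ((hY j).differentiableOn (by simp)).differentiableAt (hM.mem_nhds hx)
  have hψd : ∀ (j : Fin ℓ) (x : Euc N), x ∈ M → DifferentiableAt ℝ (ψ j) x := fun j x hx =>
    differentiableAt_fun_id.inner ℝ (hYd j x hx)
  -- first derivative of the Gaussian along any vector field
  have hEval : ∀ (γ : ℝ) (Z : Euc N → Euc N) (x : Euc N),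
      vAct Z (fun y => Real.exp (-γ * ‖y‖ ^ 2)) x
        = Real.exp (-γ * ‖x‖ ^ 2) * (-γ * (2 * @inner ℝ _ _ x (Z x))) := by
    intro γ Z x
    have h := (((hasStrictFDerivAt_norm_sq x).hasFDerivAt).const_mul (-γ)).exp
    rw [vAct, h.fderiv]
    simp only [ContinuousLinearMap.smul_apply, innerSL_apply_apply, smul_eq_mul, nsmul_eq_mul,
      Nat.cast_ofNat]
  -- second derivative along Y j
  have hSecond : ∀ (γ : ℝ) (j : Fin ℓ) (x : Euc N), x ∈ M →
      vAct (Y j) (vAct (Y j) (fun y => Real.exp (-γ * ‖y‖ ^ 2))) x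
        = Real.exp (-γ * ‖x‖ ^ 2) *
          (4 * γ ^ 2 * (ψ j x) ^ 2 - 2 * γ * fderiv ℝ (ψ j) x (Y j x)) := by
    intro γ j x hx
    have hfun : (vAct (Y j) (fun y => Real.exp (-γ * ‖y‖ ^ 2)))
        = fun y => Real.exp (-γ * ‖y‖ ^ 2) * (-γ * (2 * ψ j y)) :=
      funext fun y => hEval γ (Y j) y
    rw [vAct, hfun]
    have hexp := (((hasStrictFDerivAt_norm_sq x).hasFDerivAt).const_mul (-γ)).exp
    have hin : HasFDerivAt (fun y => -γ * (2 * ψ j y))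
        ((-γ) • ((2 : ℝ) • fderiv ℝ (ψ j) x)) x :=
      (((hψd j x hx).hasFDerivAt.const_mul (2 : ℝ)).const_mul (-γ))
    have hprod := hexp.fun_mul hin
    rw [hprod.fderiv]
    simp only [ContinuousLinearMap.add_apply, ContinuousLinearMap.smul_apply, innerSL_apply_apply,
      smul_eq_mul, nsmul_eq_mul, Nat.cast_ofNat]
    ring
  -- the coefficient functions
  set A : Euc N → ℝ := fun x => ∑ j, (ψ j x) ^ 2 with hAdef
  set B : Euc N → ℝ := fun x => (∑ j, fderiv ℝ (ψ j) x (Y j x)) + ψ₀ x with hBdef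
  have hψC : ∀ j : Fin ℓ, ContDiffOn ℝ (⊤ : ℕ∞) (ψ j) M := fun j =>
    ContDiffOn.inner ℝ contDiffOn_id (hY j)
  have hAcont : ContinuousOn A M := by
    apply continuousOn_finset_sum
    intro j _
    exact ((hψC j).continuousOn).pow 2
  have hBcont : ContinuousOn B M := by
    apply ContinuousOn.add
    · apply continuousOn_finset_sum
      intro j _
      exact ((hψC j).continuousOn_fderiv_of_isOpen hM (by simp)).clm_apply (hY j).continuousOn
    · exact ContinuousOn.inner continuousOn_id hY₀.continuousOn
  -- positivity of A at x₁
  have hψ₁ : ψ j₀ x₁ ≠ 0 := by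
    intro h0
    apply hj₀
    rw [vAct, (hasStrictFDerivAt_norm_sq x₁).hasFDerivAt.fderiv]
    simp [innerSL_apply_apply]
    simpa [hψdef] using h0
  have hA₁ : 0 < A x₁ := by
    have h1 : (ψ j₀ x₁) ^ 2 ≤ A x₁ := by
      apply Finset.single_le_sum (f := fun j => (ψ j x₁) ^ 2)
      · intro i _; positivity
      · exact Finset.mem_univ j₀
    have h2 : 0 < (ψ j₀ x₁) ^ 2 := by positivity
    linarith
  set a : ℝ := A x₁ / 2 with hadef
  set b : ℝ := |B x₁| + 1 with hbdef
  have ha : 0 < a := by positivity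
  have hb : 0 < b := by positivity
  -- the neighborhood
  refine ⟨(M ∩ A ⁻¹' Ioi a) ∩ (M ∩ B ⁻¹' Ioo (-b) b), ?_, ?_, ?_, ?_⟩
  · exact (hAcont.isOpen_inter_preimage hM isOpen_Ioi).inter
      (hBcont.isOpen_inter_preimage hM isOpen_Ioo)
  · refine ⟨⟨hx₁, ?_⟩, hx₁, ?_⟩
    · simp only [mem_preimage, mem_Ioi, hadef]; linarith
    · constructor
      · have := neg_abs_le (B x₁); simp only [hbdef]; linarith
      · have := le_abs_self (B x₁); simp only [hbdef]; linarith
  · intro x hx; exact hx.1.1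
  · refine ⟨max 1 (b / a), lt_max_of_lt_left one_pos, ?_⟩
    intro γ hγ x hx
    obtain ⟨⟨hxM, hxA⟩, -, hxB1, hxB2⟩ := hx
    have hγ1 : (1 : ℝ) ≤ γ := le_trans (le_max_left _ _) hγ
    have hγ0 : 0 < γ := lt_of_lt_of_le one_pos hγ1
    have hγ2 : b ≤ γ * a := by
      have := le_trans (le_max_right 1 (b / a)) hγ
      calc b = (b / a) * a := by field_simp
        _ ≤ γ * a := by nlinarith
    -- rewrite the operator
    have hsum : (∑ j, vAct (Y j) (vAct (Y j) (fun y => Real.exp (-γ * ‖y‖ ^ 2))) x)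
        + vAct Y₀ (fun y => Real.exp (-γ * ‖y‖ ^ 2)) x
        = Real.exp (-γ * ‖x‖ ^ 2) * (4 * γ ^ 2 * A x - 2 * γ * B x) := by
      rw [Finset.sum_congr rfl (fun j _ => hSecond γ j x hxM), hEval γ Y₀ x,
        ← Finset.mul_sum, ← mul_add]
      congr 1
      rw [hAdef, hBdef, Finset.sum_sub_distrib, ← Finset.mul_sum, ← Finset.mul_sum]
      ring
    rw [hsum]
    have hAx : a < A x := hxA
    have hpos : 0 < 4 * γ ^ 2 * A x - 2 * γ * B x := by
      nlinarith [mul_pos hγ0 hγ0, mul_pos hγ0 ha, mul_pos hγ0 hb,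
        mul_lt_mul_of_pos_left hAx (by positivity : (0:ℝ) < 4 * γ ^ 2),
        mul_lt_mul_of_pos_left hxB2 (by positivity : (0:ℝ) < 2 * γ)]
    exact mul_pos (Real.exp_pos _) hpos
end
end

section
/- Let Ω ⊆ ℝ^N be open, let X, Y be smooth vector fields on Ω, and let u : Ω → ℂ be a C¹ function with (X + iY)u = 0 on Ω (i.e. L̄u = 0 where L̄ = X + iY). Let O ⊆ ℂ be an open set containing u(Ω) and let F : O → ℝ be a C¹ function with F(u(x)) = 0 for all x ∈ Ω and with nonvanishing differential, DF(z) ≠ 0 for all z ∈ O. Then Xu = 0 and Yu = 0 on Ω; consequently Du(x)(X(x)) = Du(x)(Y(x)) = 0 at every x ∈ Ω, so u is constant along any C¹ curve in Ω whose velocity lies pointwise in the span of X and Y. -/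
open Set MeasureTheory

noncomputable section

variable {N : ℕ}

lemma aux_lin (L : ℂ →L[ℝ] ℝ) (hL : L ≠ 0) (a : ℂ) (h1 : L a = 0)
    (h2 : L (Complex.I * a) = 0) : a = 0 := by
  by_contra h
  apply hL
  ext z
  have hz : z = (z / a).re • a + (z / a).im • (Complex.I * a) := by
    rw [Complex.real_smul, Complex.real_smul]
    have : ((z / a).re : ℂ) * a + ((z / a).im : ℂ) * (Complex.I * a)
        = (((z / a).re : ℂ) + (z / a).im * Complex.I) * a := by ring
    rw [this, Complex.re_add_im, div_mul_cancel₀ _ h]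
  rw [hz, map_add, _root_.map_smul, _root_.map_smul, h1, h2]
  simp

/-- Computational core of Lemma 5.1: a CR function whose values lie on a level set
`{F = 0}` of a real valued C¹ function with nonvanishing differential satisfies
`Xu = Yu = 0`, hence is constant along any C¹ curve with velocity in `span {X, Y}`. -/
theorem stmt_13 {N : ℕ} (Ω : Set (Euc N)) (hΩ : IsOpen Ω)
    (X Y : Euc N → Euc N) (hX : ContDiffOn ℝ (⊤ : ℕ∞) X Ω) (hY : ContDiffOn ℝ (⊤ : ℕ∞) Y Ω)
    (u : Euc N → ℂ) (hu : ContDiffOn ℝ 1 u Ω)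
    (hCR : ∀ x ∈ Ω, Lbar X Y u x = 0)
    (O : Set ℂ) (hO : IsOpen O) (hrange : ∀ x ∈ Ω, u x ∈ O)
    (F : ℂ → ℝ) (hF : ContDiffOn ℝ 1 F O)
    (hFu : ∀ x ∈ Ω, F (u x) = 0)
    (hdF : ∀ z ∈ O, fderiv ℝ F z ≠ 0) :
    (∀ x ∈ Ω, vAct X u x = 0 ∧ vAct Y u x = 0) ∧
    (∀ s : ℝ → Euc N, ContDiffOn ℝ 1 s (Icc 0 1) →
      (∀ t ∈ Icc (0 : ℝ) 1, s t ∈ Ω) →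
      (∀ t ∈ Icc (0 : ℝ) 1,
        derivWithin s (Icc 0 1) t ∈ Submodule.span ℝ {X (s t), Y (s t)}) →
      ∀ t ∈ Icc (0 : ℝ) 1, u (s t) = u (s 0)) := by
  have hkey : ∀ x ∈ Ω, vAct X u x = 0 ∧ vAct Y u x = 0 := by
    intro x hx
    have hux : DifferentiableAt ℝ u x :=
      (hu.contDiffAt (hΩ.mem_nhds hx)).differentiableAt one_ne_zero
    have hFx : DifferentiableAt ℝ F (u x) :=
      (hF.contDiffAt (hO.mem_nhds (hrange x hx))).differentiableAt one_ne_zero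
    have hcomp : fderiv ℝ (F ∘ u) x = (fderiv ℝ F (u x)).comp (fderiv ℝ u x) :=
      fderiv_comp x hFx hux
    have hzero : fderiv ℝ (F ∘ u) x = 0 := by
      have heq : (F ∘ u) =ᶠ[nhds x] fun _ => (0 : ℝ) :=
        Filter.eventuallyEq_of_mem (hΩ.mem_nhds hx) (fun y hy => hFu y hy)
      rw [heq.fderiv_eq, fderiv_fun_const]
      rfl
    have hLv : ∀ v, fderiv ℝ F (u x) (fderiv ℝ u x v) = 0 := by
      intro v
      have := hcomp.symm.trans hzero
      exact congrFun (congrArg (fun (T : Euc N →L[ℝ] ℝ) => (T : Euc N → ℝ)) this) v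
    have hLne := hdF (u x) (hrange x hx)
    have hab : vAct X u x + Complex.I * vAct Y u x = 0 := hCR x hx
    set a := vAct X u x with hadef
    set b := vAct Y u x with hbdef
    have hb : b = Complex.I * a := by
      linear_combination (-Complex.I) * hab + b * Complex.I_mul_I
    have ha0 : a = 0 := by
      refine aux_lin _ hLne a (hLv (X x)) ?_
      rw [← hb]
      exact hLv (Y x)
    exact ⟨ha0, by rw [hb, ha0, mul_zero]⟩
  refine ⟨hkey, ?_⟩
  intro s hs hsΩ hspan
  have hder : ∀ t ∈ Icc (0:ℝ) 1, HasDerivWithinAt (fun t => u (s t)) 0 (Icc 0 1) t := by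
    intro t ht
    have hst := hsΩ t ht
    have hux : DifferentiableAt ℝ u (s t) :=
      (hu.contDiffAt (hΩ.mem_nhds hst)).differentiableAt one_ne_zero
    have hsd : HasDerivWithinAt s (derivWithin s (Icc 0 1) t) (Icc 0 1) t :=
      ((hs.differentiableOn one_ne_zero) t ht).hasDerivWithinAt
    have hcomp := hux.hasFDerivAt.comp_hasDerivWithinAt t hsd
    have hval : fderiv ℝ u (s t) (derivWithin s (Icc 0 1) t) = 0 := by
      obtain ⟨c, d, hcd⟩ := Submodule.mem_span_pair.mp (hspan t ht)
      have h1 := (hkey (s t) hst).1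
      have h2 := (hkey (s t) hst).2
      simp only [vAct] at h1 h2
      rw [← hcd, map_add, _root_.map_smul, _root_.map_smul, h1, h2]
      simp
    rw [hval] at hcomp
    exact hcomp
  have hdiff : DifferentiableOn ℝ (fun t => u (s t)) (Icc 0 1) :=
    fun t ht => (hder t ht).differentiableWithinAt
  have hderiv0 : ∀ t ∈ Ico (0:ℝ) 1, derivWithin (fun t => u (s t)) (Icc 0 1) t = 0 :=
    fun t ht => (hder t (Ico_subset_Icc_self ht)).derivWithin
      (uniqueDiffOn_Icc one_pos t (Ico_subset_Icc_self ht))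
  exact constant_of_derivWithin_zero hdiff hderiv0
end
end
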